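/- arXiv:1802.00467 — 4 statements merged into one kernel-verified Lean document; each statement's English description precedes it below -/
import Mathlib

section
/- Let Γ be a bipartite metrically homogeneous graph of generic type with diameter δ ≥ 3 and let ε ∈ {0,1} be such that Γ^{τ_ε} is metrically homogeneous. Then δ ≡ ε (mod 2) and C₀ = 2(δ+ε)+2. -/
open SimpleGraph

section Defs

variable {V : Type*}

/-- A graph is *metrically homogeneous* if it is connected and every
distance-preserving map defined on a finite set of vertices extends to a
distance-preserving bijection of the whole vertex set (with respect to the
path metric). -/
def IsMetricallyHomogeneous (G : SimpleGraph V) : Prop :=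
  G.Connected ∧
  ∀ (s : Finset V) (f : V → V),
    (∀ x ∈ s, ∀ y ∈ s, G.dist (f x) (f y) = G.dist x y) →
    ∃ g : V ≃ V, (∀ x y : V, G.dist (g x) (g y) = G.dist x y) ∧ ∀ x ∈ s, g x = f x

/-- `δ` is the diameter of `G` (with respect to the path metric). -/
def HasDiameter (G : SimpleGraph V) (δ : ℕ) : Prop :=
  (∀ x y : V, G.dist x y ≤ δ) ∧ ∃ x y : V, G.dist x y = δ

/-- The set of (nonzero) distances realized in `G`. -/
def DistSet (G : SimpleGraph V) : Set ℕ :=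
  {n : ℕ | 0 < n ∧ ∃ x y : V, G.dist x y = n}

/-- `G` is of *generic type*: any two vertices at distance `2` have infinitely
many common neighbors forming an independent set, and the set of neighbors of
any fixed vertex (with the induced metric) carries no non-trivial equivalence
relation invariant under all of its self-isometries. -/
def GenericType (G : SimpleGraph V) : Prop :=
  (∀ x y : V, G.dist x y = 2 →
    {z : V | G.Adj x z ∧ G.Adj y z}.Infinite ∧
    ∀ z w : V, (G.Adj x z ∧ G.Adj y z) → (G.Adj x w ∧ G.Adj y w) → ¬ G.Adj z w) ∧
  ∀ v : V, ∀ r : G.neighborSet v → G.neighborSet v → Prop,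
    Equivalence r →
    (∀ g : G.neighborSet v ≃ G.neighborSet v,
      (∀ x y : G.neighborSet v, G.dist (g x : V) (g y : V) = G.dist (x : V) (y : V)) →
      ∀ x y : G.neighborSet v, r x y → r (g x) (g y)) →
    (∀ x y, r x y) ∨ (∀ x y, r x y → x = y)

/-- A triangle of type `(a,b,c)` is realized in `G`. -/
def RealizesTriangle (G : SimpleGraph V) (a b c : ℕ) : Prop :=
  ∃ x y z : V, G.dist x y = a ∧ G.dist y z = b ∧ G.dist x z = c

/-- `G` contains a triangle (three distinct vertices) of perimeter `p`. -/
def RealizesPerimeter (G : SimpleGraph V) (p : ℕ) : Prop :=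
  ∃ x y z : V, x ≠ y ∧ y ≠ z ∧ x ≠ z ∧ G.dist x y + G.dist y z + G.dist x z = p

/-- `k` is the parameter `K₁` of `G`: the least `m` such that a triangle of
type `(m,m,1)` is realized in `G`. -/
def IsK1 (G : SimpleGraph V) (k : ℕ) : Prop :=
  IsLeast {m : ℕ | RealizesTriangle G m m 1} k

/-- `k` is the parameter `K₂` of `G`: the greatest `m` such that a triangle of
type `(m,m,1)` is realized in `G`. -/
def IsK2 (G : SimpleGraph V) (k : ℕ) : Prop :=
  IsGreatest {m : ℕ | RealizesTriangle G m m 1} k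

/-- `c` is the parameter `C₀` of `G` (relative to the diameter `δ`): the least
even number greater than `2δ` such that no triangle of perimeter `c` occurs. -/
def IsC0 (G : SimpleGraph V) (δ c : ℕ) : Prop :=
  IsLeast {c' : ℕ | Even c' ∧ 2 * δ < c' ∧ ¬ RealizesPerimeter G c'} c

/-- `c` is the parameter `C₁` of `G` (relative to the diameter `δ`): the least
odd number greater than `2δ` such that no triangle of perimeter `c` occurs. -/
def IsC1 (G : SimpleGraph V) (δ c : ℕ) : Prop :=
  IsLeast {c' : ℕ | Odd c' ∧ 2 * δ < c' ∧ ¬ RealizesPerimeter G c'} c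

/-- `G` (of diameter `δ`) is antipodal: every vertex has a unique vertex at
distance `δ` from it. -/
def IsAntipodal (G : SimpleGraph V) (δ : ℕ) : Prop :=
  ∀ v : V, ∃! w : V, G.dist v w = δ

/-- `G` is bipartite. -/
def IsBipartiteGraph (G : SimpleGraph V) : Prop :=
  ∃ f : V → Bool, ∀ x y : V, G.Adj x y → f x ≠ f y

/-- `G` is complete multipartite: there is an equivalence relation such that
two vertices are adjacent exactly when they are inequivalent. -/
def IsCompleteMultipartiteGraph (G : SimpleGraph V) : Prop :=
  ∃ r : V → V → Prop, Equivalence r ∧ ∀ x y : V, G.Adj x y ↔ ¬ r x y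

/-- `G` is an `n`-cycle. -/
def IsNCycle (G : SimpleGraph V) (n : ℕ) : Prop :=
  ∃ e : V ≃ ZMod n, ∀ x y : V, G.Adj x y ↔ (e x - e y = 1 ∨ e y - e x = 1)

/-- The permutation `ρ` of `{1,…,δ}`. -/
def rhoFun (δ i : ℕ) : ℕ := if 2 * i ≤ δ then 2 * i else 2 * (δ - i) + 1

/-- The permutation `ρ⁻¹` of `{1,…,δ}`. -/
def rhoInvFun (δ i : ℕ) : ℕ := if Even i then i / 2 else δ - (i - 1) / 2

/-- The involution `τ_ε` of `{1,…,δ}`, for `ε = 0` or `1`. -/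
def tauFun (δ ε i : ℕ) : ℕ := if Odd (min i (δ + ε - i)) then δ + ε - i else i

/-- The `n`-cycle graph on `ZMod n`. -/
def zmodCycleGraph (n : ℕ) : SimpleGraph (ZMod n) where
  Adj x y := x ≠ y ∧ (x - y = 1 ∨ y - x = 1)
  symm := ⟨fun x y h => ⟨h.1.symm, h.2.symm⟩⟩
  loopless := ⟨fun x h => h.1 rfl⟩

end Defs

/-
Every `Γ^τ`-edge joins two vertices at `Γ`-distance `δ + ε - 1`. Since `Γ^τ` is connected and
`Γ` is bipartite, this distance must be odd, i.e. `δ + ε` is even. Then `τ` fixes even distances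
and sends an odd `i` to `δ + ε - i`, so in a triangle of `Γ` with two odd sides the triangle
inequality of `Γ^τ` bounds the perimeter by `2(δ + ε)`. A triangle with three even sides, one of
them shorter than `δ`, is reduced to that case by lengthening the short side by one step, which
homogeneity allows. The only triangle left, `(δ, δ, δ)`, has perimeter `3δ ≠ 2(δ + ε) + 2`.
Conversely the `Γ^τ`-midpoint of two vertices at distance `2` spans a triangle of type
`(δ + ε - 1, δ + ε - 1, 2)`, of perimeter `2(δ + ε)`, so no smaller even perimeter is missing.
-/

namespace SimpleGraph

variable {V : Type*} {G : SimpleGraph V}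

lemma Connected.exists_dist_eq_of_le (hG : G.Connected) {x y : V} {j : ℕ}
    (hj : j ≤ G.dist x y) : ∃ z, G.dist x z = j ∧ G.dist z y = G.dist x y - j := by
  obtain ⟨p, hp⟩ := hG.exists_walk_length_eq_dist x y
  have hxz : G.dist x (p.getVert j) ≤ j := by
    simpa [hp, hj] using dist_le (p.take j)
  have hzy : G.dist (p.getVert j) y ≤ G.dist x y - j := by
    simpa [hp] using dist_le (p.drop j)
  have := hG.dist_triangle (u := x) (v := p.getVert j) (w := y)
  exact ⟨p.getVert j, by omega, by omega⟩

lemma Coloring.even_dist_iff_congr (hG : G.Connected) (c : G.Coloring Bool) (x y : V) :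
    Even (G.dist x y) ↔ (c x ↔ c y) := by
  obtain ⟨p, hp⟩ := hG.exists_walk_length_eq_dist x y
  rw [← hp]
  exact c.even_length_iff_congr p

end SimpleGraph

section Metric

variable {V : Type*} {G : SimpleGraph V}

lemma IsBipartiteGraph.even_dist_add_dist_add_dist (hb : IsBipartiteGraph G) (hG : G.Connected)
    (x y z : V) : Even (G.dist x y + G.dist y z + G.dist x z) := by
  obtain ⟨f, hf⟩ := hb
  let c : G.Coloring Bool := Coloring.mk f fun h => hf _ _ h
  simp only [Nat.even_add, c.even_dist_iff_congr hG]
  tauto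

lemma HasDiameter.exists_dist_eq {δ : ℕ} (hd : HasDiameter G δ) (hG : G.Connected) {j : ℕ}
    (hj : j ≤ δ) : ∃ x y : V, G.dist x y = j := by
  obtain ⟨x, y, hxy⟩ := hd.2
  obtain ⟨z, hz, -⟩ := hG.exists_dist_eq_of_le (x := x) (y := y) (j := j) (by omega)
  exact ⟨x, z, hz⟩

lemma IsMetricallyHomogeneous.exists_isometry_of_dist_eq (hG : IsMetricallyHomogeneous G)
    {x y u v : V} (h : G.dist u v = G.dist x y) :
    ∃ g : V ≃ V, (∀ a b, G.dist (g a) (g b) = G.dist a b) ∧ g x = u ∧ g y = v := by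
  classical
  by_cases hxy : x = y
  · subst hxy
    obtain rfl : u = v := by simpa [hG.1.dist_eq_zero_iff] using h
    obtain ⟨g, hg, hgx⟩ := hG.2 {x} (fun _ => u) (by simp)
    exact ⟨g, hg, hgx x (by simp), hgx x (by simp)⟩
  · have hyx : G.dist v u = G.dist y x := by rw [dist_comm, h, dist_comm]
    obtain ⟨g, hg, hgs⟩ := hG.2 {x, y} (fun a => if a = x then u else v) (by
      simp only [Finset.mem_insert, Finset.mem_singleton]
      rintro a (rfl | rfl) b (rfl | rfl) <;> simp [Ne.symm hxy, h, hyx])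
    exact ⟨g, hg, by simpa using hgs x (by simp), by simpa [Ne.symm hxy] using hgs y (by simp)⟩

lemma IsMetricallyHomogeneous.exists_adj_dist_succ (hG : IsMetricallyHomogeneous G) {u v : V}
    (hr : ∃ x t : V, G.dist x t = G.dist u v + 1) :
    ∃ m, G.Adj v m ∧ G.dist u m = G.dist u v + 1 := by
  obtain ⟨x, t, hxt⟩ := hr
  obtain ⟨w, hxw, hwt⟩ := hG.1.exists_dist_eq_of_le (x := x) (y := t) (j := G.dist u v) (by omega)
  obtain ⟨g, hg, rfl, rfl⟩ := hG.exists_isometry_of_dist_eq hxw.symm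
  refine ⟨g t, ?_, by rw [hg, hxt]⟩
  rw [← dist_eq_one_iff_adj, hg]
  omega

end Metric

section Tau

variable {δ ε d : ℕ}

lemma tauFun_of_odd (hL : Even (δ + ε)) (hd : d ≤ δ + ε) (hodd : Odd d) :
    tauFun δ ε d = δ + ε - d := by
  have hmin : Odd (min d (δ + ε - d)) := by
    rcases min_choice d (δ + ε - d) with h | h <;> rw [h]
    exacts [hodd, Nat.Even.sub_odd hd hL hodd]
  rw [tauFun, if_pos hmin]

lemma tauFun_of_even (hL : Even (δ + ε)) (heven : Even d) : tauFun δ ε d = d := by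
  have hmin : Even (min d (δ + ε - d)) := by
    rcases min_choice d (δ + ε - d) with h | h <;> rw [h]
    exacts [heven, hL.tsub heven]
  rw [tauFun, if_neg (Nat.not_odd_iff_even.mpr hmin)]

lemma eq_sub_one_of_tauFun_eq_one (hL : 2 ≤ δ + ε) (h : tauFun δ ε d = 1) :
    d = δ + ε - 1 := by
  unfold tauFun at h
  split_ifs at h with hodd
  · omega
  · exact absurd (by rw [h, min_eq_left (by omega)]; exact odd_one) hodd

end Tau

section Twist

variable {V : Type*} {G H : SimpleGraph V} {δ ε : ℕ}

lemma dist_eq_of_adj_of_twist (hL : 2 ≤ δ + ε)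
    (htw : ∀ x y : V, x ≠ y → H.dist x y = tauFun δ ε (G.dist x y)) {x y : V} (h : H.Adj x y) :
    G.dist x y = δ + ε - 1 :=
  eq_sub_one_of_tauFun_eq_one hL (by rw [← htw x y h.ne, dist_eq_one_iff_adj.mpr h])

lemma even_add_of_twist (hb : IsBipartiteGraph G) (hG : G.Connected) (hH : H.Connected)
    (hL : 2 ≤ δ + ε) (htw : ∀ x y : V, x ≠ y → H.dist x y = tauFun δ ε (G.dist x y))
    {x y : V} (hxy : G.Adj x y) : Even (δ + ε) := by
  by_contra hodd
  have hstep : ∀ {u w : V}, H.Adj u w → Even (G.dist u w) := fun h => by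
    rw [dist_eq_of_adj_of_twist hL htw h, Nat.even_iff]
    rw [Nat.even_iff] at hodd
    omega
  have hwalk : ∀ {u v : V} (p : H.Walk u v), Even (G.dist u v) := by
    intro u v p
    induction p with
    | nil => simp
    | @cons u w v h _ ih =>
      have := hb.even_dist_add_dist_add_dist hG u w v
      simp only [Nat.even_add, hstep h, ih, true_iff] at this
      exact this
  have := hwalk (hH.preconnected x y).some
  rw [dist_eq_one_iff_adj.mpr hxy] at this
  exact Nat.not_even_one this

lemma perimeter_le_of_odd_of_odd (hb : IsBipartiteGraph G) (hG : G.Connected) (hH : H.Connected)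
    (hdiam : ∀ x y : V, G.dist x y ≤ δ) (hL : Even (δ + ε))
    (htw : ∀ x y : V, x ≠ y → H.dist x y = tauFun δ ε (G.dist x y))
    {u v w : V} (huv : Odd (G.dist u v)) (hvw : Odd (G.dist v w)) :
    G.dist u v + G.dist v w + G.dist u w ≤ 2 * (δ + ε) := by
  have huw : Even (G.dist u w) := by
    have := hb.even_dist_add_dist_add_dist hG u v w
    rw [Nat.even_iff] at this ⊢
    rw [Nat.odd_iff] at huv hvw
    omega
  have huv_le := hdiam u v
  have hvw_le := hdiam v w
  rcases eq_or_ne u w with rfl | huw_ne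
  · rw [dist_self, dist_comm (u := v)]
    omega
  · have hu : u ≠ v := by rintro rfl; simp at huv
    have hv : v ≠ w := by rintro rfl; simp at hvw
    have htri := hH.dist_triangle (u := u) (v := v) (w := w)
    rw [htw u v hu, htw v w hv, htw u w huw_ne, tauFun_of_odd hL (by omega) huv,
      tauFun_of_odd hL (by omega) hvw, tauFun_of_even hL huw] at htri
    omega

lemma perimeter_le_of_even_of_even (hG : IsMetricallyHomogeneous G) (hb : IsBipartiteGraph G)
    (hH : H.Connected) (hdiam : HasDiameter G δ) (hL : Even (δ + ε))
    (htw : ∀ x y : V, x ≠ y → H.dist x y = tauFun δ ε (G.dist x y))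
    {x y z : V} (hxy : Even (G.dist x y)) (hyz : Even (G.dist y z)) (hlt : G.dist y z < δ) :
    G.dist x y + G.dist y z + G.dist x z ≤ 2 * (δ + ε) := by
  rw [dist_comm (u := y)] at hyz hlt ⊢
  obtain ⟨m, hym, hzm⟩ := hG.exists_adj_dist_succ (hdiam.exists_dist_eq hG.1 hlt)
  rw [← dist_eq_one_iff_adj] at hym
  have hxm : Odd (G.dist x m) := by
    have := hb.even_dist_add_dist_add_dist hG.1 x y m
    rw [hym, Nat.even_iff] at this
    rw [Nat.even_iff] at hxy
    rw [Nat.odd_iff]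
    omega
  have hmz : Odd (G.dist m z) := by rw [dist_comm, hzm]; exact hyz.add_one
  have hperim := perimeter_le_of_odd_of_odd hb hG.1 hH hdiam.1 hL htw hxm hmz
  have htri := hG.1.dist_triangle (u := x) (v := m) (w := y)
  rw [dist_comm (u := m), hym] at htri
  rw [dist_comm (u := m), hzm] at hperim
  omega

lemma perimeter_le_of_twist (hG : IsMetricallyHomogeneous G) (hb : IsBipartiteGraph G)
    (hH : H.Connected) (hdiam : HasDiameter G δ) (hL : Even (δ + ε))
    (htw : ∀ x y : V, x ≠ y → H.dist x y = tauFun δ ε (G.dist x y)) (x y z : V) :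
    G.dist x y + G.dist y z + G.dist x z ≤ 2 * (δ + ε) ∨
      G.dist x y = δ ∧ G.dist y z = δ ∧ G.dist x z = δ := by
  -- By parity, either two sides sharing a vertex are odd, or all three sides are even.
  have hpar := hb.even_dist_add_dist_add_dist hG.1 x y z
  have odd₁ := perimeter_le_of_odd_of_odd hb hG.1 hH hdiam.1 hL htw (u := x) (v := y) (w := z)
  have odd₂ := perimeter_le_of_odd_of_odd hb hG.1 hH hdiam.1 hL htw (u := y) (v := z) (w := x)
  have odd₃ := perimeter_le_of_odd_of_odd hb hG.1 hH hdiam.1 hL htw (u := z) (v := x) (w := y)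
  have even₁ := perimeter_le_of_even_of_even hG hb hH hdiam hL htw (x := x) (y := y) (z := z)
  have even₂ := perimeter_le_of_even_of_even hG hb hH hdiam hL htw (x := y) (y := z) (z := x)
  have even₃ := perimeter_le_of_even_of_even hG hb hH hdiam hL htw (x := z) (y := x) (z := y)
  have := hdiam.1 x y
  have := hdiam.1 y z
  have := hdiam.1 x z
  simp only [Nat.odd_iff, Nat.even_iff, dist_comm (u := z) (v := x), dist_comm (u := y) (v := x),
    dist_comm (u := z) (v := y)] at *
  omega

lemma realizesPerimeter_of_twist (hG : G.Connected) (hH : H.Connected) (hdiam : HasDiameter G δ)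
    (hδ : 2 ≤ δ) (hL : Even (δ + ε))
    (htw : ∀ x y : V, x ≠ y → H.dist x y = tauFun δ ε (G.dist x y)) :
    RealizesPerimeter G (2 * (δ + ε)) := by
  obtain ⟨x, z, hxz⟩ := hdiam.exists_dist_eq hG hδ
  have hne : x ≠ z := by rintro rfl; simp at hxz
  have hH2 : H.dist x z = 2 := by rw [htw x z hne, hxz, tauFun_of_even hL even_two]
  obtain ⟨y, hxy, hyz⟩ := hH.exists_dist_eq_of_le (x := x) (y := z) (j := 1) (by omega)
  rw [dist_eq_one_iff_adj] at hxy
  rw [hH2, show 2 - 1 = 1 from rfl, dist_eq_one_iff_adj] at hyz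
  refine ⟨x, y, z, hxy.ne, hyz.ne, hne, ?_⟩
  rw [dist_eq_of_adj_of_twist (by omega) htw hxy, dist_eq_of_adj_of_twist (by omega) htw hyz, hxz]
  omega

end Twist

theorem necessity_tau_bipartite_general {V : Type*} (G H : SimpleGraph V) (δ ε : ℕ)
    (hδ : 3 ≤ δ) (hε : ε ≤ 1)
    (hG : IsMetricallyHomogeneous G)
    (hbip : IsBipartiteGraph G)
    (hdiam : HasDiameter G δ)
    (hH : IsMetricallyHomogeneous H)
    (htw : ∀ x y : V, x ≠ y → H.dist x y = tauFun δ ε (G.dist x y)) :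
    δ % 2 = ε ∧ IsC0 G δ (2 * (δ + ε) + 2) := by
  obtain ⟨x, y, hxy⟩ := hdiam.exists_dist_eq hG.1 (j := 1) (by omega)
  have hL : Even (δ + ε) :=
    even_add_of_twist hbip hG.1 hH.1 (by omega) htw (dist_eq_one_iff_adj.mp hxy)
  have hL₂ := Nat.even_iff.mp hL
  have hnoP : ¬ RealizesPerimeter G (2 * (δ + ε) + 2) := by
    rintro ⟨x, y, z, -, -, -, hsum⟩
    have := perimeter_le_of_twist hG hbip hH.1 hdiam hL htw x y z
    omega
  refine ⟨by omega, ⟨⟨δ + ε + 1, by ring⟩, by omega, hnoP⟩, ?_⟩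
  rintro c ⟨hc, hδc, hnc⟩
  by_contra! hlt
  obtain rfl : c = 2 * (δ + ε) := by rw [Nat.even_iff] at hc; omega
  exact hnc (realizesPerimeter_of_twist hG.1 hH.1 hdiam (by omega) hL htw)

/-- if `Γ` is bipartite of generic type and `Γ^{τ_ε}` is
metrically homogeneous, then `δ ≡ ε (mod 2)` and `C₀ = 2(δ+ε)+2`. -/
theorem necessity_tau_bipartite {V : Type*} (G H : SimpleGraph V) (δ ε : ℕ)
    (hδ : 3 ≤ δ) (hε : ε ≤ 1)
    (hG : IsMetricallyHomogeneous G) (hgen : GenericType G)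
    (hbip : IsBipartiteGraph G)
    (hdiam : HasDiameter G δ)
    (hH : IsMetricallyHomogeneous H)
    (htw : ∀ x y : V, x ≠ y → H.dist x y = tauFun δ ε (G.dist x y)) :
    δ % 2 = ε ∧ IsC0 G δ (2 * (δ + ε) + 2) :=
  necessity_tau_bipartite_general G H δ ε hδ hε hG hbip hdiam hH htw
end

section
/- Let Γ be a metrically homogeneous graph of generic type with diameter δ ≥ 3 such that Γ^{τ₀} is metrically homogeneous, and suppose moreover that Γ is not bipartite. Then Γ is antipodal, and its numerical parameters satisfy K₁ = ⌊δ/2⌋ and K₂ = ⌈δ/2⌉. -/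
open SimpleGraph

/-!
The involution `τ₀` fixes `δ` and swaps `1` with `δ - 1`, and `Γ` is in turn the `τ₀`-twist of
`Γ^{τ₀}`, so each triangle inequality in `Γ^{τ₀}` forbids some triangle types in `Γ`. Playing
geodesics of the two graphs against each other excludes triangles of type `(δ, δ, j)` for
`j ∈ {1, 2, δ - 1, δ}` (for `δ = 3` the generic type takes over); as two antipodes of a vertex are
always at such a distance `j`, `Γ` is antipodal.

If `(m, m, 1)` is realized on `x, y, z`, a vertex `p` at distance `δ` from `x` lies at distances
`δ - m` and `δ - 1` from `y` and `z`, and the twisted triangle inequalities on `xyz` and `yzp` give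
`δ - 1 ≤ 2m ≤ δ + 1`. Non-bipartiteness provides such a triangle when `δ` is even. When `δ` is odd, a
geodesic of `Γ^{τ₀}` between the ends of an edge of `Γ` has even length `δ - 1`, and its midpoint
gives one; building `p` over both ends of the edge then turns `(m, m, 1)` into `(δ - m, δ - m, 1)`.
-/

section

variable {V : Type*}

theorem SimpleGraph.Connected.exists_dist_eq_dist_eq {G : SimpleGraph V} (hG : G.Connected)
    {x y : V} {i k : ℕ} (h : G.dist x y = i + k) : ∃ u, G.dist x u = i ∧ G.dist u y = k := by
  obtain ⟨p, hp⟩ := hG.exists_walk_length_eq_dist x y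
  have hxu := dist_le (p.take i)
  have huy := dist_le (p.drop i)
  have htri := hG.dist_triangle (u := x) (v := p.getVert i) (w := y)
  simp only [Walk.take_length, Walk.drop_length] at hxu huy
  exact ⟨p.getVert i, by omega, by omega⟩

theorem SimpleGraph.Connected.exists_realizesTriangle_of_not_isBipartiteGraph
    {G : SimpleGraph V} (hG : G.Connected) (h : ¬ IsBipartiteGraph G) :
    ∃ m, RealizesTriangle G m m 1 := by
  by_contra! hno
  obtain ⟨v⟩ := hG.nonempty
  refine h ⟨fun x => decide (G.dist v x % 2 = 1), fun x y hxy => ?_⟩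
  have hxy' : G.dist x y = 1 := dist_eq_one_iff_adj.mpr hxy
  have hyx : G.dist y x = 1 := dist_eq_one_iff_adj.mpr hxy.symm
  have hvy : G.dist v y ≤ G.dist v x + G.dist x y := hG.dist_triangle
  have hvx : G.dist v x ≤ G.dist v y + G.dist y x := hG.dist_triangle
  have hne : G.dist v x ≠ G.dist v y := fun he =>
    hno _ ⟨x, v, y, dist_comm, he ▸ rfl, hxy'⟩
  simp only [ne_eq, decide_eq_decide]
  omega

theorem IsMetricallyHomogeneous.exists_isometry_apply_eq_apply_eq {G : SimpleGraph V}
    (hG : IsMetricallyHomogeneous G) {a b a' b' : V} (h : G.dist a' b' = G.dist a b) :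
    ∃ g : V ≃ V, (∀ x y, G.dist (g x) (g y) = G.dist x y) ∧ g a' = a ∧ g b' = b := by
  classical
  set f : V → V := fun t => if t = b' then b else a
  have hfb : f b' = b := if_pos rfl
  have hfa : f a' = a := by
    by_cases hab : a' = b'
    · subst hab
      exact hfb.trans (hG.1.dist_eq_zero_iff.mp (by rw [← h, dist_self])).symm
    · exact if_neg hab
  have h' : G.dist b a = G.dist b' a' := by rw [dist_comm, ← h, dist_comm]
  obtain ⟨g, hg, hgf⟩ := hG.2 {a', b'} f (by
    simp only [Finset.mem_insert, Finset.mem_singleton]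
    rintro x (rfl | rfl) y (rfl | rfl) <;> simp [hfa, hfb, h, h'])
  exact ⟨g, hg, (hgf a' (by simp)).trans hfa, (hgf b' (by simp)).trans hfb⟩

theorem IsMetricallyHomogeneous.exists_dist_eq_dist_eq {G : SimpleGraph V}
    (hG : IsMetricallyHomogeneous G) {a b a' b' : V} (h : G.dist a' b' = G.dist a b) (p' : V) :
    ∃ p, G.dist a p = G.dist a' p' ∧ G.dist b p = G.dist b' p' := by
  obtain ⟨g, hg, rfl, rfl⟩ := hG.exists_isometry_apply_eq_apply_eq h
  exact ⟨g p', hg _ _, hg _ _⟩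

section Tau

theorem tauFun_zero_eq (δ i : ℕ) :
    tauFun δ 0 i = if min i (δ - i) % 2 = 1 then δ - i else i := by
  simp [tauFun, Nat.odd_iff]

variable {δ i : ℕ}

theorem tauFun_zero_eq_self_or_eq_sub (δ i : ℕ) : tauFun δ 0 i = i ∨ tauFun δ 0 i = δ - i := by
  rw [tauFun_zero_eq]; split_ifs <;> simp

theorem tauFun_zero_le (h : i ≤ δ) : tauFun δ 0 i ≤ δ := by
  rw [tauFun_zero_eq]; split_ifs <;> omega

theorem tauFun_zero_tauFun_zero (h : i ≤ δ) : tauFun δ 0 (tauFun δ 0 i) = i := by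
  rcases tauFun_zero_eq_self_or_eq_sub δ i with hi | hi <;>
    rw [hi, tauFun_zero_eq] <;> rw [tauFun_zero_eq] at hi <;> split_ifs at hi ⊢ <;> omega

theorem tauFun_zero_add_tauFun_zero_sub (h : i ≤ δ) :
    tauFun δ 0 i + tauFun δ 0 (δ - i) = δ := by
  rw [tauFun_zero_eq, tauFun_zero_eq]; split_ifs <;> omega

theorem tauFun_zero_zero : tauFun δ 0 0 = 0 := by
  rw [tauFun_zero_eq]; split_ifs <;> omega

theorem tauFun_zero_self : tauFun δ 0 δ = δ := by
  rw [tauFun_zero_eq]; split_ifs <;> omega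

theorem tauFun_zero_one (h : 2 ≤ δ) : tauFun δ 0 1 = δ - 1 := by
  rw [tauFun_zero_eq]; split_ifs <;> omega

theorem tauFun_zero_sub_one (h : 2 ≤ δ) : tauFun δ 0 (δ - 1) = 1 := by
  rw [tauFun_zero_eq]; split_ifs <;> omega

theorem tauFun_zero_two (h : 4 ≤ δ) : tauFun δ 0 2 = 2 := by
  rw [tauFun_zero_eq]; split_ifs <;> omega

theorem tauFun_zero_three_le (h : 4 ≤ δ) : tauFun δ 0 3 ≤ δ - 2 := by
  rw [tauFun_zero_eq]; split_ifs <;> omega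

theorem eq_one_or_eq_of_sub_one_le_tauFun_zero (hδ : 2 ≤ δ) (hi : i ≤ δ)
    (h : δ - 1 ≤ tauFun δ 0 i) : i = 1 ∨ i = δ := by
  rw [tauFun_zero_eq] at h; split_ifs at h <;> omega

end Tau

structure IsTauTwist (G H : SimpleGraph V) (δ : ℕ) : Prop where
  connected : G.Connected
  connected_twist : H.Connected
  dist_le : ∀ x y, G.dist x y ≤ δ
  dist_twist_of_ne : ∀ x y, x ≠ y → H.dist x y = tauFun δ 0 (G.dist x y)

structure IsHomogeneousTauTwist (G H : SimpleGraph V) (δ : ℕ) : Prop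
    extends IsTauTwist G H δ where
  homogeneous : IsMetricallyHomogeneous G
  exists_dist_eq : ∃ x y, G.dist x y = δ

namespace IsTauTwist

variable {G H : SimpleGraph V} {δ : ℕ} {p x z : V}

theorem dist_twist (P : IsTauTwist G H δ) (x y : V) :
    H.dist x y = tauFun δ 0 (G.dist x y) := by
  rcases eq_or_ne x y with rfl | hxy
  · simp [tauFun_zero_zero]
  · exact P.dist_twist_of_ne x y hxy

theorem symm (P : IsTauTwist G H δ) : IsTauTwist H G δ where
  connected := P.connected_twist
  connected_twist := P.connected
  dist_le x y := P.dist_twist x y ▸ tauFun_zero_le (P.dist_le x y)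
  dist_twist_of_ne x y _ := by rw [P.dist_twist, tauFun_zero_tauFun_zero (P.dist_le x y)]

theorem tauFun_dist_le_add (P : IsTauTwist G H δ) (x y z : V) :
    tauFun δ 0 (G.dist x z) ≤ tauFun δ 0 (G.dist x y) + tauFun δ 0 (G.dist y z) := by
  simpa only [P.dist_twist] using P.connected_twist.dist_triangle (u := x) (v := y) (w := z)

theorem realizesTriangle_twist (P : IsTauTwist G H δ) {a b c : ℕ}
    (h : RealizesTriangle G a b c) :
    RealizesTriangle H (tauFun δ 0 a) (tauFun δ 0 b) (tauFun δ 0 c) := by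
  obtain ⟨x, y, z, rfl, rfl, rfl⟩ := h
  exact ⟨x, y, z, P.dist_twist x y, P.dist_twist y z, P.dist_twist x z⟩

theorem dist_eq_sub_one (P : IsTauTwist G H δ) (hA : ¬ RealizesTriangle G δ δ 1)
    (hpx : G.dist p x = δ) (hxz : G.dist x z = 1) : G.dist p z = δ - 1 := by
  have hpz : G.dist p x ≤ G.dist p z + G.dist z x := P.connected.dist_triangle
  have hzx : G.dist z x = 1 := dist_comm.trans hxz
  rcases (by have := P.dist_le p z; omega : G.dist p z = δ - 1 ∨ G.dist p z = δ) with h | h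
  · exact h
  · exact absurd ⟨x, p, z, dist_comm.trans hpx, h, hxz⟩ hA

theorem not_realizesTriangle_diam_diam_one (P : IsTauTwist G H δ) (hδ : 4 ≤ δ) :
    ¬ RealizesTriangle G δ δ 1 := by
  rintro ⟨w, v, w', hwv, hvw', hww'⟩
  obtain ⟨x₂, hvx₂, hx₂w⟩ :=
    P.connected.exists_dist_eq_dist_eq (i := 2) (k := δ - 2) (x := v) (y := w)
      (by rw [dist_comm, hwv]; omega)
  obtain ⟨x₁, hvx₁, hx₁x₂⟩ := P.connected.exists_dist_eq_dist_eq (i := 1) (k := 1) hvx₂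
  have hx₁w : G.dist x₁ w = δ - 1 := by
    have h₁ : G.dist v w ≤ G.dist v x₁ + G.dist x₁ w := P.connected.dist_triangle
    have h₂ : G.dist x₁ w ≤ G.dist x₁ x₂ + G.dist x₂ w := P.connected.dist_triangle
    rw [dist_comm, hwv] at h₁
    omega
  -- a triangle of type `(δ-1, δ-1, 1)` would twist to one of type `(1, 1, δ-1)`
  have hx₁w' : G.dist x₁ w' = δ := by
    have h₁ : G.dist v w' ≤ G.dist v x₁ + G.dist x₁ w' := P.connected.dist_triangle
    have hτ := P.tauFun_dist_le_add w x₁ w'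
    rw [hww', dist_comm, hx₁w, tauFun_zero_one (by omega)] at hτ
    have := P.dist_le x₁ w'
    rcases (by omega : G.dist x₁ w' = δ - 1 ∨ G.dist x₁ w' = δ) with h | h
    · rw [h, tauFun_zero_sub_one (by omega)] at hτ; omega
    · exact h
  have hx₂w' : G.dist x₂ w' = δ - 1 := by
    have h₁ : G.dist x₁ w' ≤ G.dist x₁ x₂ + G.dist x₂ w' := P.connected.dist_triangle
    have h₂ : G.dist x₂ w' ≤ G.dist x₂ w + G.dist w w' := P.connected.dist_triangle
    omega
  have hτ := P.tauFun_dist_le_add v x₂ w'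
  rw [hvw', hvx₂, hx₂w', tauFun_zero_self, tauFun_zero_two hδ,
    tauFun_zero_sub_one (by omega)] at hτ
  omega

theorem not_realizesTriangle_diam_diam_sub_one (P : IsTauTwist G H δ) (hδ : 4 ≤ δ) :
    ¬ RealizesTriangle G δ δ (δ - 1) := fun h =>
  P.symm.not_realizesTriangle_diam_diam_one hδ <| by
    simpa only [tauFun_zero_self, tauFun_zero_sub_one (show 2 ≤ δ by omega)] using
      P.realizesTriangle_twist h

theorem not_realizesTriangle_diam_diam_diam (P : IsTauTwist G H δ) (hδ : 3 ≤ δ)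
    (hA : ¬ RealizesTriangle G δ δ 1) : ¬ RealizesTriangle G δ δ δ := by
  rintro ⟨w, v, w', hwv, hvw', hww'⟩
  obtain ⟨z, hw'z, hzw⟩ :=
    P.connected_twist.exists_dist_eq_dist_eq (i := 1) (k := δ - 1) (x := w') (y := w)
      (by rw [P.dist_twist, dist_comm, hww', tauFun_zero_self]; omega)
  have hzw' : G.dist z w' = δ - 1 := by
    rw [P.symm.dist_twist, dist_comm, hw'z, tauFun_zero_one (by omega)]
  have hwz : G.dist w z = 1 := by
    rw [P.symm.dist_twist, dist_comm, hzw, tauFun_zero_sub_one (by omega)]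
  have hvz := P.dist_eq_sub_one hA (dist_comm.trans hwv) hwz
  have hτ := P.tauFun_dist_le_add v z w'
  rw [hvw', hvz, hzw', tauFun_zero_self, tauFun_zero_sub_one (by omega)] at hτ
  omega

theorem not_realizesTriangle_two_two_three (P : IsTauTwist G H 3) :
    ¬ RealizesTriangle G 2 2 3 := by
  rintro ⟨x, y, z, hxy, hyz, hxz⟩
  have hτ := P.tauFun_dist_le_add x y z
  rw [hxy, hyz, hxz] at hτ
  exact absurd hτ (by decide)

theorem not_realizesTriangle_three_three_one (P : IsTauTwist G H 3) (hgen : GenericType G) :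
    ¬ RealizesTriangle G 3 3 1 := by
  rintro ⟨w, v, w', hwv, hvw', hww'⟩
  rw [SimpleGraph.dist_comm] at hwv
  obtain ⟨u, hvu, huw⟩ := P.connected.exists_dist_eq_dist_eq (i := 2) (k := 1) hwv
  obtain ⟨z, hvz, hzu⟩ := (hgen.1 v u hvu).1.nonempty
  have hzw : G.dist z w = 2 := by
    have h₁ : G.dist v w ≤ G.dist v z + G.dist z w := P.connected.dist_triangle
    have h₂ : G.dist z w ≤ G.dist z u + G.dist u w := P.connected.dist_triangle
    rw [hwv, dist_eq_one_iff_adj.mpr hvz] at h₁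
    rw [dist_eq_one_iff_adj.mpr hzu.symm, huw] at h₂
    omega
  have hadj : ∀ s, G.Adj z s → G.Adj w s → G.Adj s w' := by
    intro s hzs hws
    have h₁ : G.dist v s ≤ G.dist v z + G.dist z s := P.connected.dist_triangle
    have h₂ : G.dist v w ≤ G.dist v s + G.dist s w := P.connected.dist_triangle
    have h₃ : G.dist v w' ≤ G.dist v s + G.dist s w' := P.connected.dist_triangle
    have h₄ : G.dist s w' ≤ G.dist s w + G.dist w w' := P.connected.dist_triangle
    rw [dist_eq_one_iff_adj.mpr hvz, dist_eq_one_iff_adj.mpr hzs] at h₁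
    rw [hwv, dist_eq_one_iff_adj.mpr hws.symm] at h₂
    rw [dist_eq_one_iff_adj.mpr hws.symm, hww'] at h₄
    have hvs : G.dist v s = 2 := by omega
    have hsw' : G.dist s w' ≠ 2 := fun h =>
      P.not_realizesTriangle_two_two_three ⟨v, s, w', hvs, h, hvw'⟩
    exact dist_eq_one_iff_adj.mp (by omega)
  obtain ⟨t, ht, t', ht', htt'⟩ := (hgen.1 z w hzw).1.nontrivial
  have hdtt' : G.dist t t' = 2 := by
    have h₁ : G.dist t t' ≤ G.dist t w + G.dist w t' := P.connected.dist_triangle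
    rw [dist_eq_one_iff_adj.mpr ht.2.symm, dist_eq_one_iff_adj.mpr ht'.2] at h₁
    have h₂ : G.dist t t' ≠ 1 := fun h =>
      (hgen.1 z w hzw).2 t t' ht ht' (dist_eq_one_iff_adj.mp h)
    have h₃ := P.connected.pos_dist_of_ne htt'
    omega
  exact (hgen.1 t t' hdtt').2 w w' ⟨ht.2.symm, ht'.2.symm⟩
    ⟨hadj t ht.1 ht.2, hadj t' ht'.1 ht'.2⟩ (dist_eq_one_iff_adj.mp hww')

theorem not_realizesTriangle_diam_diam_one_of_genericType (P : IsTauTwist G H δ)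
    (hδ : 3 ≤ δ) (hgen : GenericType G) : ¬ RealizesTriangle G δ δ 1 := by
  rcases (by omega : δ = 3 ∨ 4 ≤ δ) with rfl | hδ
  · exact P.not_realizesTriangle_three_three_one hgen
  · exact P.not_realizesTriangle_diam_diam_one hδ

end IsTauTwist

namespace IsHomogeneousTauTwist

variable {G H : SimpleGraph V} {δ m : ℕ}

theorem exists_dist_eq_diam_dist_eq_sub (T : IsHomogeneousTauTwist G H δ) (x y : V) :
    ∃ p, G.dist x p = δ ∧ G.dist y p = δ - G.dist x y := by
  obtain ⟨X, Y, hXY⟩ := T.exists_dist_eq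
  obtain ⟨u, hXu, huY⟩ := T.connected.exists_dist_eq_dist_eq (i := G.dist x y)
    (k := δ - G.dist x y) (by rw [hXY]; have := T.dist_le x y; omega)
  obtain ⟨p, hxp, hyp⟩ := T.homogeneous.exists_dist_eq_dist_eq hXu Y
  exact ⟨p, hxp.trans hXY, hyp.trans huY⟩

theorem exists_dist_eq_diam (T : IsHomogeneousTauTwist G H δ) (v : V) : ∃ w, G.dist v w = δ :=
  (T.exists_dist_eq_diam_dist_eq_sub v v).imp fun _ h => h.1

theorem exists_dist_eq_diam_of_dist_eq_one (T : IsHomogeneousTauTwist G H δ)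
    (hA : ¬ RealizesTriangle G δ δ 1) {x z : V} (hxz : G.dist x z = 1) (y : V) :
    ∃ p, G.dist x p = δ ∧ G.dist y p = δ - G.dist x y ∧ G.dist z p = δ - 1 := by
  obtain ⟨p, hxp, hyp⟩ := T.exists_dist_eq_diam_dist_eq_sub x y
  refine ⟨p, hxp, hyp, ?_⟩
  rw [SimpleGraph.dist_comm]
  exact T.dist_eq_sub_one hA (dist_comm.trans hxp) hxz

theorem not_realizesTriangle_diam_diam_two (T : IsHomogeneousTauTwist G H δ) (hδ : 4 ≤ δ)
    (hA : ¬ RealizesTriangle G δ δ 1) : ¬ RealizesTriangle G δ δ 2 := by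
  rintro ⟨w, v, w', hwv, hvw', hww'⟩
  obtain ⟨X, Y, hXY⟩ := T.exists_dist_eq
  obtain ⟨u₃, hXu₃, -⟩ := T.connected.exists_dist_eq_dist_eq (i := 3) (k := δ - 3)
    (by rw [hXY]; omega)
  obtain ⟨u₁, hXu₁, hu₁u₃⟩ := T.connected.exists_dist_eq_dist_eq (i := 1) (k := 2) hXu₃
  obtain ⟨p, hwp, hw'p⟩ := T.homogeneous.exists_dist_eq_dist_eq (hu₁u₃.trans hww'.symm) X
  rw [SimpleGraph.dist_comm (u := u₁), hXu₁] at hwp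
  rw [SimpleGraph.dist_comm (u := u₃), hXu₃] at hw'p
  have hvp := T.dist_eq_sub_one hA (dist_comm.trans hwv) hwp
  have hτ := T.tauFun_dist_le_add v p w'
  rw [hvw', hvp, dist_comm, hw'p, tauFun_zero_self, tauFun_zero_sub_one (by omega)] at hτ
  have := tauFun_zero_three_le hδ
  omega

theorem not_realizesTriangle_three_three_two (T : IsHomogeneousTauTwist G H 3)
    (hgen : GenericType G) (h111 : RealizesTriangle G 1 1 1) (hA : ¬ RealizesTriangle G 3 3 1) :
    ¬ RealizesTriangle G 3 3 2 := by
  rintro ⟨w, v, w', hwv, hvw', hww'⟩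
  obtain ⟨u, hwu, hw'u⟩ := (hgen.1 w w' hww').1.nonempty
  obtain ⟨a, b, c, hab, hbc, hac⟩ := h111
  -- every edge lies in a triangle
  obtain ⟨s, hws, hus⟩ := T.homogeneous.exists_dist_eq_dist_eq (a := w) (b := u)
    (hac.trans (dist_eq_one_iff_adj.mpr hwu).symm) b
  rw [hab] at hws
  rw [SimpleGraph.dist_comm (u := c), hbc] at hus
  have hvs := T.dist_eq_sub_one hA (dist_comm.trans hwv) hws
  have hsw' : G.dist s w' = 1 := by
    have h₁ : G.dist s w' ≤ G.dist s u + G.dist u w' := T.connected.dist_triangle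
    have h₂ : G.dist v w' ≤ G.dist v s + G.dist s w' := T.connected.dist_triangle
    have huw' : G.dist u w' = 1 := dist_eq_one_iff_adj.mpr hw'u.symm
    have hsu : G.dist s u = 1 := dist_comm.trans hus
    have h₃ : G.dist s w' ≠ 2 := fun h =>
      T.not_realizesTriangle_two_two_three ⟨v, s, w', hvs, h, hvw'⟩
    omega
  exact (hgen.1 w w' hww').2 s u
    ⟨dist_eq_one_iff_adj.mp hws, (dist_eq_one_iff_adj.mp hsw').symm⟩ ⟨hwu, hw'u⟩
    (dist_eq_one_iff_adj.mp (dist_comm.trans hus))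

theorem isAntipodal (T : IsHomogeneousTauTwist G H δ) (hδ : 2 ≤ δ)
    (h₁ : ¬ RealizesTriangle G δ δ 1) (h₂ : ¬ RealizesTriangle G δ δ 2)
    (h₃ : ¬ RealizesTriangle G δ δ (δ - 1)) (h₄ : ¬ RealizesTriangle G δ δ δ) :
    IsAntipodal G δ := by
  intro v
  obtain ⟨w, hvw⟩ := T.exists_dist_eq_diam v
  refine ⟨w, hvw, fun w' (hvw' : G.dist v w' = δ) => ?_⟩
  by_contra hne
  have hR : RealizesTriangle G δ δ (G.dist w' w) := ⟨w', v, w, dist_comm.trans hvw', hvw, rfl⟩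
  -- the vertex `x` next to `w` on a geodesic from `v` is at distance `1` or `δ` from `w'`
  obtain ⟨x, hvx, hxw⟩ := T.connected.exists_dist_eq_dist_eq (i := δ - 1) (k := 1)
    (by rw [hvw]; omega)
  have hτ := T.tauFun_dist_le_add v x w'
  rw [hvw', hvx, tauFun_zero_self, tauFun_zero_sub_one hδ] at hτ
  have hxw' := eq_one_or_eq_of_sub_one_le_tauFun_zero hδ (T.dist_le x w') (by omega)
  have hpos := T.connected.pos_dist_of_ne hne
  have hle := T.dist_le w' w
  have t₁ : G.dist w' w ≤ G.dist w' x + G.dist x w := T.connected.dist_triangle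
  have t₂ : G.dist x w' ≤ G.dist x w + G.dist w w' := T.connected.dist_triangle
  have c₁ : G.dist w' x = G.dist x w' := dist_comm
  have c₂ : G.dist w w' = G.dist w' w := dist_comm
  rcases (by omega : G.dist w' w = 1 ∨ G.dist w' w = 2 ∨ G.dist w' w = δ - 1 ∨
      G.dist w' w = δ) with h | h | h | h <;> rw [h] at hR <;> contradiction

theorem isAntipodal_of_four_le (T : IsHomogeneousTauTwist G H δ) (hδ : 4 ≤ δ) :
    IsAntipodal G δ :=
  have hA := T.not_realizesTriangle_diam_diam_one hδ
  T.isAntipodal (by omega) hA (T.not_realizesTriangle_diam_diam_two hδ hA)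
    (T.not_realizesTriangle_diam_diam_sub_one hδ)
    (T.not_realizesTriangle_diam_diam_diam (by omega) hA)

theorem isAntipodal_three (T : IsHomogeneousTauTwist G H 3) (hgen : GenericType G)
    (h111 : RealizesTriangle G 1 1 1) : IsAntipodal G 3 :=
  have hA := T.not_realizesTriangle_three_three_one hgen
  have h₂ := T.not_realizesTriangle_three_three_two hgen h111 hA
  T.isAntipodal (by omega) hA h₂ h₂ (T.not_realizesTriangle_diam_diam_diam le_rfl hA)

theorem eq_half_of_realizesTriangle (T : IsHomogeneousTauTwist G H δ) (hδ : 2 ≤ δ)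
    (hA : ¬ RealizesTriangle G δ δ 1) (h : RealizesTriangle G m m 1) :
    m = δ / 2 ∨ m = (δ + 1) / 2 := by
  obtain ⟨x, y, z, rfl, hyz, hxz⟩ := h
  obtain ⟨p, -, hyp, hzp⟩ := T.exists_dist_eq_diam_of_dist_eq_one hA hxz y
  have hτ₁ := T.tauFun_dist_le_add x y z
  have hτ₂ := T.tauFun_dist_le_add y p z
  rw [hyz, hxz, tauFun_zero_one hδ] at hτ₁
  rw [hyz, hyp, SimpleGraph.dist_comm (u := p), hzp, tauFun_zero_sub_one hδ] at hτ₂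
  have hsum := tauFun_zero_add_tauFun_zero_sub (T.dist_le x y)
  rcases tauFun_zero_eq_self_or_eq_sub δ (G.dist x y) with h | h <;> omega

theorem realizesTriangle_sub (T : IsHomogeneousTauTwist G H δ) (hδ : 2 ≤ δ)
    (hA : ¬ RealizesTriangle G δ δ 1) (hm : δ < 2 * m ∨ ¬ RealizesTriangle G δ δ (δ - 1))
    (h : RealizesTriangle G m m 1) : RealizesTriangle G (δ - m) (δ - m) 1 := by
  obtain ⟨x, y, z, hxy, hyz, hxz⟩ := h
  obtain ⟨p, hxp, hyp, hzp⟩ := T.exists_dist_eq_diam_of_dist_eq_one hA hxz y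
  obtain ⟨q, -, hyq, hxq⟩ := T.exists_dist_eq_diam_of_dist_eq_one hA (dist_comm.trans hxz) y
  rw [hxy] at hyp
  rw [SimpleGraph.dist_comm (u := z), hyz] at hyq
  have hτ := T.tauFun_dist_le_add p q x
  rw [SimpleGraph.dist_comm (u := p), hxp, SimpleGraph.dist_comm (u := q), hxq, tauFun_zero_self,
    tauFun_zero_sub_one hδ] at hτ
  rcases eq_one_or_eq_of_sub_one_le_tauFun_zero hδ (T.dist_le p q) (by omega) with hpq | hpq
  · exact ⟨p, y, q, dist_comm.trans hyp, hyq, hpq⟩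
  · rcases hm with hm | hm
    · have := T.connected.dist_triangle (u := p) (v := y) (w := q)
      rw [hpq, SimpleGraph.dist_comm (u := p), hyp, hyq] at this
      omega
    · exact absurd ⟨x, p, q, hxp, hpq, hxq⟩ hm

theorem realizesTriangle_tauFun_half (T : IsHomogeneousTauTwist G H δ) (hδ : 2 ≤ δ)
    (hodd : Odd δ) : RealizesTriangle G (tauFun δ 0 (δ / 2)) (tauFun δ 0 (δ / 2)) 1 := by
  obtain ⟨X, Y, hXY⟩ := T.exists_dist_eq
  obtain ⟨x, hXx, -⟩ := T.connected.exists_dist_eq_dist_eq (i := 1) (k := δ - 1)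
    (by rw [hXY]; omega)
  -- an edge of `G` has even length `δ - 1` in `H`; split an `H`-geodesic along it in half
  obtain ⟨u, hXu, hux⟩ := T.connected_twist.exists_dist_eq_dist_eq (i := δ / 2) (k := δ / 2)
    (x := X) (y := x) (by rw [T.dist_twist, hXx, tauFun_zero_one hδ]; grind)
  exact ⟨X, u, x, by rw [T.symm.dist_twist, hXu], by rw [T.symm.dist_twist, hux], hXx⟩

theorem realizesTriangle_floor_and_ceil_half (T : IsHomogeneousTauTwist G H δ) (hδ : 3 ≤ δ)
    (hA : ¬ RealizesTriangle G δ δ 1) (hnbip : ¬ IsBipartiteGraph G) :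
    RealizesTriangle G (δ / 2) (δ / 2) 1 ∧ RealizesTriangle G ((δ + 1) / 2) ((δ + 1) / 2) 1 := by
  rcases Nat.even_or_odd δ with hev | hodd
  · obtain ⟨m, hm⟩ := T.connected.exists_realizesTriangle_of_not_isBipartiteGraph hnbip
    have hceil : (δ + 1) / 2 = δ / 2 := by have := Nat.even_iff.mp hev; omega
    obtain rfl : m = δ / 2 := by
      rcases T.eq_half_of_realizesTriangle (by omega) hA hm with h | h <;> omega
    exact ⟨hm, hceil ▸ hm⟩
  have hodd' := Nat.odd_iff.mp hodd
  have hceil : (δ + 1) / 2 = δ - δ / 2 := by omega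
  have hhalf := T.realizesTriangle_tauFun_half (by omega) hodd
  rcases tauFun_zero_eq_self_or_eq_sub δ (δ / 2) with h | h <;> rw [h] at hhalf
  · have hδ' : 4 ≤ δ := by
      by_contra! hlt
      obtain rfl : δ = 3 := by omega
      exact absurd h (by decide)
    exact ⟨hhalf, hceil ▸ T.realizesTriangle_sub (by omega) hA
      (.inr (T.not_realizesTriangle_diam_diam_sub_one hδ')) hhalf⟩
  · have hfloor : δ - (δ - δ / 2) = δ / 2 := by omega
    exact ⟨hfloor ▸ T.realizesTriangle_sub (by omega) hA (.inl (by omega)) hhalf, hceil ▸ hhalf⟩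

end IsHomogeneousTauTwist

end

/-- if `Γ` is not bipartite, of generic type, and `Γ^{τ₀}` is
metrically homogeneous, then `Γ` is antipodal with `K₁ = ⌊δ/2⌋`,
`K₂ = ⌈δ/2⌉`. -/
theorem necessity_tau_zero_not_bipartite {V : Type*} (G H : SimpleGraph V)
    (δ : ℕ) (hδ : 3 ≤ δ)
    (hG : IsMetricallyHomogeneous G) (hgen : GenericType G)
    (hnbip : ¬ IsBipartiteGraph G)
    (hdiam : HasDiameter G δ)
    (hH : IsMetricallyHomogeneous H)
    (htw : ∀ x y : V, x ≠ y → H.dist x y = tauFun δ 0 (G.dist x y)) :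
    IsAntipodal G δ ∧ IsK1 G (δ / 2) ∧ IsK2 G ((δ + 1) / 2) := by
  have T : IsHomogeneousTauTwist G H δ := ⟨⟨hG.1, hH.1, hdiam.1, htw⟩, hG, hdiam.2⟩
  have hA := T.not_realizesTriangle_diam_diam_one_of_genericType hδ hgen
  obtain ⟨hfloor, hceil⟩ := T.realizesTriangle_floor_and_ceil_half hδ hA hnbip
  have hhalf := fun m => T.eq_half_of_realizesTriangle (m := m) (by omega) hA
  have hanti : IsAntipodal G δ := by
    rcases (by omega : δ = 3 ∨ 4 ≤ δ) with rfl | hδ'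
    · exact T.isAntipodal_three hgen hfloor
    · exact T.isAntipodal_of_four_le hδ'
  refine ⟨hanti, ⟨hfloor, fun m hm => ?_⟩, ⟨hceil, fun m hm => ?_⟩⟩ <;>
    rcases hhalf m hm with h | h <;> omega
end

section
/- Let Γ be a metrically homogeneous graph of generic type with finite diameter δ ≥ 3 whose numerical parameters are K₁ = δ, K₂ = δ, C = 3δ+1, C' = C+1. Then Γ^{ρ⁻¹} is a metrically homogeneous graph. -/
/-!
The edges of `Γ^{ρ⁻¹}` are the pairs at distance `2` in `Γ`, and the point is that its path
metric is `ρ⁻¹ ∘ d`. Since `K₁ = K₂ = δ`, along an edge of `Γ` the distance to a fixed vertex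
changes by exactly one unless it stays at `δ`; hence `ρ⁻¹ ∘ d` grows by at most one along an edge
of `Γ^{ρ⁻¹}`. Conversely, homogeneity erects on every pair at distance `d > 0` a triangle
`(d, e, 2)` with `ρ⁻¹(e) = ρ⁻¹(d) - 1`: `e = d - 2` for `d` even, `e = d + 2` for `d` odd, and
`e ∈ {δ - 1, δ}` at the top, from a triangle `(2, δ - 1, δ)` cut out of a triangle `(δ, δ, 1)` by
a geodesic. As `ρ⁻¹` is injective, `Γ` and `Γ^{ρ⁻¹}` have the same isometries.
-/

open SimpleGraph

section Rho

def IsDistStep (δ a b : ℕ) : Prop := a + 1 = b ∨ b + 1 = a ∨ (a = δ ∧ b = δ)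

lemma rhoInvFun_injOn (δ : ℕ) : Set.InjOn (rhoInvFun δ) (Set.Iic δ) := by
  intro a ha b hb h
  simp only [Set.mem_Iic] at ha hb
  simp only [rhoInvFun, Nat.even_iff] at h
  split_ifs at h <;> omega

lemma rhoInvFun_le_add_one_of_isDistStep {δ a b c : ℕ} (hab : IsDistStep δ a b)
    (hbc : IsDistStep δ b c) (hc : c ≤ δ) :
    rhoInvFun δ c ≤ rhoInvFun δ a + 1 := by
  simp only [IsDistStep] at hab hbc
  simp only [rhoInvFun, Nat.even_iff]
  split_ifs <;> omega

end Rho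

namespace SimpleGraph

variable {V : Type*} {G : SimpleGraph V} {u v : V}

lemma Walk.dist_getVert_le (p : G.Walk u v) {i j : ℕ} (hij : i ≤ j) :
    G.dist (p.getVert i) (p.getVert j) ≤ j - i := by
  have h := dist_le ((p.drop i).take (j - i))
  rw [Walk.take_length] at h
  rw [Walk.drop_getVert, Nat.add_sub_cancel' hij] at h
  exact h.trans (min_le_left _ _)

lemma Walk.dist_getVert_of_length_eq_dist (p : G.Walk u v) (hp : p.length = G.dist u v)
    {i j : ℕ} (hij : i ≤ j) (hj : j ≤ p.length) :
    G.dist (p.getVert i) (p.getVert j) = j - i := by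
  have hui : G.dist u (p.getVert i) ≤ i := by simpa using p.dist_getVert_le (Nat.zero_le i)
  have hjv : G.dist (p.getVert j) v ≤ p.length - j := by simpa using p.dist_getVert_le hj
  have h₁ := (p.take i).reachable.dist_triangle_left (p.getVert j)
  have h₂ := (p.take j).reachable.dist_triangle_left v
  exact le_antisymm (p.dist_getVert_le hij) (by omega)

/-- `Γ^{ρ⁻¹}`: its edges are the pairs at distance `2` in `G`, since `ρ⁻¹(2) = 1`. -/
def distTwoGraph (G : SimpleGraph V) : SimpleGraph V where
  Adj a b := G.dist a b = 2
  symm := ⟨fun _ _ h => dist_comm.trans h⟩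
  loopless := ⟨fun _ h => by simp at h⟩

end SimpleGraph

section Homogeneity

variable {V : Type*} {G : SimpleGraph V}

lemma RealizesTriangle.swap_bc {a b c : ℕ} (h : RealizesTriangle G a b c) :
    RealizesTriangle G a c b := by
  obtain ⟨x, y, z, hxy, hyz, hxz⟩ := h
  exact ⟨y, x, z, dist_comm.trans hxy, hxz, hyz⟩

lemma RealizesTriangle.swap_ac {a b c : ℕ} (h : RealizesTriangle G a b c) :
    RealizesTriangle G c b a := by
  obtain ⟨x, y, z, hxy, hyz, hxz⟩ := h
  exact ⟨x, z, y, hxz, dist_comm.trans hyz, hxy⟩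

lemma HasDiameter.realizesTriangle_add {δ : ℕ} (hc : G.Connected) (hdiam : HasDiameter G δ)
    {i k : ℕ} (hik : i + k ≤ δ) : RealizesTriangle G i k (i + k) := by
  obtain ⟨x, y, hxy⟩ := hdiam.2
  obtain ⟨p, hp⟩ := hc.exists_walk_length_eq_dist x y
  have hgeo {i j : ℕ} (hij : i ≤ j) (hj : j ≤ δ) :=
    p.dist_getVert_of_length_eq_dist hp hij (by omega)
  refine ⟨p.getVert 0, p.getVert i, p.getVert (i + k), ?_, ?_, ?_⟩
  · rw [hgeo (Nat.zero_le i) (by omega), Nat.sub_zero]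
  · rw [hgeo (Nat.le_add_right i k) hik, Nat.add_sub_cancel_left]
  · rw [hgeo (Nat.zero_le _) hik, Nat.sub_zero]

lemma IsMetricallyHomogeneous.exists_isometry_map_pair (hG : IsMetricallyHomogeneous G)
    {x y x' y' : V} (h : G.dist x' y' = G.dist x y) :
    ∃ g : V ≃ V, (∀ a b, G.dist (g a) (g b) = G.dist a b) ∧ g x = x' ∧ g y = y' := by
  classical
  have hf : x = y → x' = y' := by
    rintro rfl
    exact hG.1.dist_eq_zero_iff.mp (by simpa using h)
  set f : V → V := fun v => if v = x then x' else y'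
  have hfx : f x = x' := if_pos rfl
  have hfy : f y = y' := by
    simp only [f]
    split_ifs with hyx
    exacts [hf hyx.symm, rfl]
  obtain ⟨g, hg, hgf⟩ := hG.2 {x, y} f (by
    simp only [Finset.mem_insert, Finset.mem_singleton]
    rintro a (rfl | rfl) b (rfl | rfl)
    · simp [hfx]
    · rw [hfx, hfy, h]
    · rw [hfx, hfy, SimpleGraph.dist_comm, h, SimpleGraph.dist_comm]
    · simp [hfy])
  exact ⟨g, hg, (hgf x (by simp)).trans hfx, (hgf y (by simp)).trans hfy⟩

lemma IsMetricallyHomogeneous.exists_apex (hG : IsMetricallyHomogeneous G) {a b c : ℕ}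
    (ht : RealizesTriangle G a b c) {x y : V} (hxy : G.dist x y = a) :
    ∃ z, G.dist y z = b ∧ G.dist x z = c := by
  obtain ⟨x₀, y₀, z₀, h₁, h₂, h₃⟩ := ht
  obtain ⟨g, hg, rfl, rfl⟩ := hG.exists_isometry_map_pair (hxy.trans h₁.symm)
  exact ⟨g z₀, (hg _ _).trans h₂, (hg _ _).trans h₃⟩

lemma IsMetricallyHomogeneous.of_dist_eq_comp {H : SimpleGraph V} (hG : IsMetricallyHomogeneous G)
    (hH : H.Connected) (φ : ℕ → ℕ) (hφ : Set.InjOn φ (Set.range (Function.uncurry G.dist)))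
    (hHG : ∀ x y, H.dist x y = φ (G.dist x y)) : IsMetricallyHomogeneous H := by
  refine ⟨hH, fun s f hf => ?_⟩
  obtain ⟨g, hg, hgf⟩ := hG.2 s f fun x hx y hy =>
    hφ ⟨(f x, f y), rfl⟩ ⟨(x, y), rfl⟩ (by have := hf x hx y hy; rwa [hHG, hHG] at this)
  exact ⟨g, fun x y => by simp only [hHG, hg], hgf⟩

end Homogeneity

section ParametersK

variable {V : Type*} {G : SimpleGraph V} {δ : ℕ}

lemma IsK1.eq_of_realizesTriangle (hK1 : IsK1 G δ) (hK2 : IsK2 G δ) {k : ℕ}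
    (h : RealizesTriangle G k k 1) : k = δ :=
  le_antisymm (hK2.2 h) (hK1.2 h)

lemma IsK1.isDistStep_of_adj (hK1 : IsK1 G δ) (hK2 : IsK2 G δ) {a b : V} (hab : G.Adj a b)
    (x : V) : IsDistStep δ (G.dist x a) (G.dist x b) := by
  by_cases heq : G.dist x a = G.dist x b
  · have hδ := hK1.eq_of_realizesTriangle hK2
      ⟨a, x, b, SimpleGraph.dist_comm, heq.symm ▸ rfl, dist_eq_one_iff_adj.mpr hab⟩
    exact Or.inr (Or.inr ⟨hδ, heq ▸ hδ⟩)
  · rcases hab.diff_dist_adj (u := x) with h | h | h <;> unfold IsDistStep <;> omega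

/-- A geodesic from `y` to `x` in a triangle `(δ, δ, 1)` on `x, y, z` passes through a vertex `u`
adjacent to `x` with `d(u, z) = 2`: it cannot be `1` because `K₁ = δ > 1`. -/
lemma IsK1.realizesTriangle_two_pred_self (hc : G.Connected) (hδ : 2 ≤ δ) (hK1 : IsK1 G δ)
    (hK2 : IsK2 G δ) : RealizesTriangle G 2 (δ - 1) δ := by
  obtain ⟨x, y, z, hxy, hyz, hxz⟩ := hK2.1
  obtain ⟨p, hp⟩ := hc.exists_walk_length_eq_dist y x
  have hlen : p.length = δ := hp.trans (SimpleGraph.dist_comm.trans hxy)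
  have hgeo {i j : ℕ} (hij : i ≤ j) (hj : j ≤ δ) :=
    p.dist_getVert_of_length_eq_dist hp hij (hlen ▸ hj)
  set u := p.getVert (δ - 1)
  have hyu : G.dist y u = δ - 1 := by simpa using hgeo (Nat.zero_le (δ - 1)) (by omega)
  have hux : G.dist u x = 1 := by
    have h := hgeo (Nat.sub_le δ 1) le_rfl
    rwa [← hlen, Walk.getVert_length, hlen, show δ - (δ - 1) = 1 by omega] at h
  have huz_ne : u ≠ z := by
    rintro rfl
    omega
  have huz_ne_one : G.dist u z ≠ 1 := fun h =>
    absurd (hK1.eq_of_realizesTriangle hK2 ⟨u, x, z, hux, hxz, h⟩) (by omega)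
  have huz : G.dist u z = 2 := by
    have := hc.dist_triangle (u := u) (v := x) (w := z)
    have := hc.pos_dist_of_ne huz_ne
    omega
  exact ⟨z, u, y, SimpleGraph.dist_comm.trans huz, SimpleGraph.dist_comm.trans hyu,
    SimpleGraph.dist_comm.trans hyz⟩

end ParametersK

section DistTwoGraph

variable {V : Type*} {G : SimpleGraph V} {δ : ℕ}

lemma exists_realizesTriangle_rhoInvFun_pred (hc : G.Connected) (hδ : 2 ≤ δ)
    (hdiam : HasDiameter G δ) (hK1 : IsK1 G δ) (hK2 : IsK2 G δ) {d : ℕ} (hd : 0 < d)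
    (hdδ : d ≤ δ) : ∃ e, RealizesTriangle G d e 2 ∧ rhoInvFun δ e + 1 = rhoInvFun δ d := by
  have htop := hK1.realizesTriangle_two_pred_self hc hδ hK2
  rcases Nat.even_or_odd d with hev | hodd
  · obtain ⟨e, rfl⟩ : ∃ e, d = 2 + e := ⟨d - 2, by rw [Nat.even_iff] at hev; omega⟩
    refine ⟨e, (hdiam.realizesTriangle_add hc hdδ).swap_ac, ?_⟩
    simp only [rhoInvFun, Nat.even_iff] at hev ⊢
    split_ifs <;> omega
  · rw [Nat.odd_iff] at hodd
    obtain hlow | rfl | hδd : d + 2 ≤ δ ∨ d = δ ∨ δ = d + 1 := by omega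
    · refine ⟨d + 2, (hdiam.realizesTriangle_add hc hlow).swap_bc, ?_⟩
      simp only [rhoInvFun, Nat.even_iff]
      split_ifs <;> omega
    · refine ⟨d - 1, htop.swap_ac, ?_⟩
      simp only [rhoInvFun, Nat.even_iff]
      split_ifs <;> omega
    · refine ⟨δ, ?_, ?_⟩
      · simpa [hδd] using htop.swap_bc.swap_ac
      · simp only [rhoInvFun, Nat.even_iff]
        split_ifs <;> omega

lemma exists_dist_two_rhoInvFun_pred (hG : IsMetricallyHomogeneous G) (hδ : 2 ≤ δ)
    (hdiam : HasDiameter G δ) (hK1 : IsK1 G δ) (hK2 : IsK2 G δ) {x y : V} (hxy : x ≠ y) :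
    ∃ z, G.dist x z = 2 ∧ rhoInvFun δ (G.dist z y) + 1 = rhoInvFun δ (G.dist x y) := by
  obtain ⟨e, ht, he⟩ := exists_realizesTriangle_rhoInvFun_pred hG.1 hδ hdiam hK1 hK2
    (hG.1.pos_dist_of_ne hxy) (hdiam.1 x y)
  obtain ⟨z, hyz, hxz⟩ := hG.exists_apex ht rfl
  exact ⟨z, hxz, by rwa [SimpleGraph.dist_comm, hyz]⟩

lemma rhoInvFun_dist_le_add_one_of_dist_eq_two (hdiam : HasDiameter G δ) (hK1 : IsK1 G δ)
    (hK2 : IsK2 G δ) {u w : V} (huw : G.dist u w = 2) (x : V) :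
    rhoInvFun δ (G.dist x w) ≤ rhoInvFun δ (G.dist x u) + 1 := by
  obtain ⟨m, hum, hmw⟩ : ∃ m, G.Adj u m ∧ G.Adj m w := by
    obtain ⟨p, hp⟩ := exists_walk_of_dist_ne_zero (by omega : G.dist u w ≠ 0)
    rw [huw] at hp
    refine ⟨p.getVert 1, by simpa using p.adj_getVert_succ (i := 0) (by omega), ?_⟩
    simpa [show 1 + 1 = p.length by omega] using p.adj_getVert_succ (i := 1) (by omega)
  exact rhoInvFun_le_add_one_of_isDistStep (hK1.isDistStep_of_adj hK2 hum x)
    (hK1.isDistStep_of_adj hK2 hmw x) (hdiam.1 x w)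

namespace SimpleGraph

lemma rhoInvFun_dist_le_length (hdiam : HasDiameter G δ) (hK1 : IsK1 G δ) (hK2 : IsK2 G δ)
    {x y : V} (p : (distTwoGraph G).Walk x y) : rhoInvFun δ (G.dist x y) ≤ p.length := by
  induction p with
  | nil => simp [rhoInvFun]
  | @cons x z y hxz p ih =>
    have hstep := rhoInvFun_dist_le_add_one_of_dist_eq_two hdiam hK1 hK2
      (dist_comm.trans hxz) y
    rw [dist_comm, dist_comm (u := y)] at hstep
    rw [Walk.length_cons]
    omega

lemma exists_walk_length_eq_rhoInvFun (hG : IsMetricallyHomogeneous G) (hδ : 2 ≤ δ)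
    (hdiam : HasDiameter G δ) (hK1 : IsK1 G δ) (hK2 : IsK2 G δ) (n : ℕ) :
    ∀ x y : V, rhoInvFun δ (G.dist x y) = n → ∃ p : (distTwoGraph G).Walk x y, p.length = n := by
  induction n with
  | zero =>
    intro x y h
    obtain rfl | hxy := eq_or_ne x y
    · exact ⟨.nil, rfl⟩
    · obtain ⟨z, -, hz⟩ := exists_dist_two_rhoInvFun_pred hG hδ hdiam hK1 hK2 hxy
      omega
  | succ n ih =>
    intro x y h
    obtain rfl | hxy := eq_or_ne x y
    · simp [rhoInvFun] at h
    · obtain ⟨z, hxz, hz⟩ := exists_dist_two_rhoInvFun_pred hG hδ hdiam hK1 hK2 hxy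
      obtain ⟨p, hp⟩ := ih z y (by omega)
      exact ⟨.cons (show (distTwoGraph G).Adj x z from hxz) p, by rw [Walk.length_cons, hp]⟩

lemma dist_distTwoGraph (hG : IsMetricallyHomogeneous G) (hδ : 2 ≤ δ)
    (hdiam : HasDiameter G δ) (hK1 : IsK1 G δ) (hK2 : IsK2 G δ) (x y : V) :
    (distTwoGraph G).dist x y = rhoInvFun δ (G.dist x y) := by
  obtain ⟨p, hp⟩ := exists_walk_length_eq_rhoInvFun hG hδ hdiam hK1 hK2 _ x y rfl
  obtain ⟨q, hq⟩ := p.reachable.exists_walk_length_eq_dist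
  exact le_antisymm (hp ▸ dist_le p) (hq ▸ rhoInvFun_dist_le_length hdiam hK1 hK2 q)

lemma connected_distTwoGraph (hG : IsMetricallyHomogeneous G) (hδ : 2 ≤ δ)
    (hdiam : HasDiameter G δ) (hK1 : IsK1 G δ) (hK2 : IsK2 G δ) : (distTwoGraph G).Connected :=
  have := hG.1.nonempty
  .mk fun x y => (exists_walk_length_eq_rhoInvFun hG hδ hdiam hK1 hK2 _ x y rfl).elim
    fun p _ => p.reachable

end SimpleGraph

end DistTwoGraph

theorem sufficiency_rho_inv_general {V : Type*} (G : SimpleGraph V) (δ : ℕ) (hδ : 3 ≤ δ)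
    (hG : IsMetricallyHomogeneous G)
    (hdiam : HasDiameter G δ)
    (hK1 : IsK1 G δ) (hK2 : IsK2 G δ) :
    ∃ H : SimpleGraph V, IsMetricallyHomogeneous H ∧
      ∀ x y : V, x ≠ y → H.dist x y = rhoInvFun δ (G.dist x y) := by
  have hδ₂ : 2 ≤ δ := by omega
  have hdist := dist_distTwoGraph hG hδ₂ hdiam hK1 hK2
  refine ⟨distTwoGraph G, ?_, fun x y _ => hdist x y⟩
  refine hG.of_dist_eq_comp (connected_distTwoGraph hG hδ₂ hdiam hK1 hK2) (rhoInvFun δ) ?_ hdist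
  exact (rhoInvFun_injOn δ).mono (Set.range_subset_iff.mpr fun p => hdiam.1 p.1 p.2)

/-- a metrically homogeneous graph of generic type with
parameters `K₁ = δ`, `K₂ = δ`, `C = 3δ+1`, `C' = C+1` is twistable by
`ρ⁻¹`. -/
theorem sufficiency_rho_inv {V : Type*} (G : SimpleGraph V) (δ : ℕ) (hδ : 3 ≤ δ)
    (hG : IsMetricallyHomogeneous G) (hgen : GenericType G)
    (hdiam : HasDiameter G δ)
    (hK1 : IsK1 G δ) (hK2 : IsK2 G δ)
    (hC : ∃ c0 c1 : ℕ, IsC0 G δ c0 ∧ IsC1 G δ c1 ∧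
      min c0 c1 = 3 * δ + 1 ∧ max c0 c1 = 3 * δ + 1 + 1) :
    ∃ H : SimpleGraph V, IsMetricallyHomogeneous H ∧
      ∀ x y : V, x ≠ y → H.dist x y = rhoInvFun δ (G.dist x y) :=
  sufficiency_rho_inv_general G δ hδ hG hdiam hK1 hK2
end

section
/- Let Γ be a metrically homogeneous graph of generic type with diameter δ, and suppose k ≤ i and i + k ≤ δ. Then Γ contains a triangle of type (i, i, 2k), i.e., three vertices with pairwise distances i, i, and 2k. -/
open SimpleGraph

/-!
Call a triangle `(y; A, B)` of type `(r, r, 2)` a wedge. In a metrically homogeneous graph of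
generic type every wedge with `r + 1 ≤ δ` has a common neighbour `u` of `A` and `B` with
`d(y, u) = r + 1`: such a configuration is found at the end of a geodesic of length `r + 1`
(the second base vertex is a common neighbour, non-adjacent by independence, of two geodesic
vertices at distance `2`), and homogeneity transports it onto any wedge.

Now take `x` and `y` at distance `i` on a geodesic of length `δ` and fill a grid of vertices
`P t c` (`t, c ≤ k`) with `d(x, P t c) = i + t - c` and `d(y, P t c) = t + c`: row `0` runs back
along the geodesic from `y` towards `x`, column `0` runs forward along it, and `P (t+1) (c+1)`
is a common neighbour of `P (t+1) c` and `P t (c+1)`, which form a wedge with apex `y`. The corner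
`P k k` lies at distance `i` from `x` and `2k` from `y`.
-/

namespace SimpleGraph

variable {V : Type*} {G : SimpleGraph V}

theorem Walk.dist_getVert_getVert_of_length_eq_dist {u v : V} {p : G.Walk u v}
    (hp : p.length = G.dist u v) {a b : ℕ} (hab : a ≤ b) (hb : b ≤ p.length) :
    G.dist (p.getVert a) (p.getVert b) = b - a := by
  have hsub : ((p.drop a).take (b - a)).IsSubwalk p :=
    ((p.drop a).isSubwalk_take _).trans (p.isSubwalk_drop a)
  have h := length_eq_dist_of_subwalk hp hsub
  rw [Walk.take_length, Walk.drop_length, Walk.drop_getVert, Nat.add_sub_cancel' hab] at h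
  rw [← h]
  omega

end SimpleGraph

open SimpleGraph

section Wedges

variable {V : Type*} {G : SimpleGraph V}

theorem IsMetricallyHomogeneous.exists_isometry_of_dist_eq_s19 (hG : IsMetricallyHomogeneous G)
    {x₁ x₂ x₃ y₁ y₂ y₃ : V} (h₁₂ : G.dist y₁ y₂ = G.dist x₁ x₂)
    (h₁₃ : G.dist y₁ y₃ = G.dist x₁ x₃) (h₂₃ : G.dist y₂ y₃ = G.dist x₂ x₃) :
    ∃ φ : V ≃ V, (∀ a b, G.dist (φ a) (φ b) = G.dist a b) ∧
      φ x₁ = y₁ ∧ φ x₂ = y₂ ∧ φ x₃ = y₃ := by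
  classical
  have heq {a b c d : V} (h : G.dist c d = G.dist a b) (hab : a = b) : c = d := by
    rw [← hG.1.dist_eq_zero_iff, h, hab, dist_self]
  let f : V → V := fun v => if v = x₁ then y₁ else if v = x₂ then y₂ else y₃
  have hf₁ : f x₁ = y₁ := if_pos rfl
  have hf₂ : f x₂ = y₂ := by
    by_cases h : x₂ = x₁
    · rw [h, hf₁]; exact heq h₁₂ h.symm
    · simp [f, h]
  have hf₃ : f x₃ = y₃ := by
    by_cases h₁ : x₃ = x₁
    · rw [h₁, hf₁]; exact heq h₁₃ h₁.symm
    by_cases h₂ : x₃ = x₂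
    · rw [h₂, hf₂]; exact heq h₂₃ h₂.symm
    simp [f, h₁, h₂]
  have h₂₁ : G.dist y₂ y₁ = G.dist x₂ x₁ := by rw [G.dist_comm, h₁₂, G.dist_comm]
  have h₃₁ : G.dist y₃ y₁ = G.dist x₃ x₁ := by rw [G.dist_comm, h₁₃, G.dist_comm]
  have h₃₂ : G.dist y₃ y₂ = G.dist x₃ x₂ := by rw [G.dist_comm, h₂₃, G.dist_comm]
  obtain ⟨φ, hφ, hφs⟩ := hG.2 {x₁, x₂, x₃} f (by
    simp only [Finset.mem_insert, Finset.mem_singleton]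
    rintro a (rfl | rfl | rfl) b (rfl | rfl | rfl) <;>
      simp [hf₁, hf₂, hf₃, h₁₂, h₁₃, h₂₃, h₂₁, h₃₁, h₃₂])
  exact ⟨φ, hφ, by simp [hφs, hf₁, hf₂, hf₃]⟩

theorem GenericType.exists_common_neighbor_dist_eq_two (hgen : GenericType G)
    (hconn : G.Connected) {a b m : V} (hab : G.dist a b = 2) (ham : G.Adj a m)
    (hbm : G.Adj b m) : ∃ z, G.Adj a z ∧ G.Adj b z ∧ G.dist m z = 2 := by
  obtain ⟨hinf, hindep⟩ := hgen.1 a b hab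
  obtain ⟨z, ⟨haz, hbz⟩, hzm⟩ := hinf.nontrivial.exists_ne m
  refine ⟨z, haz, hbz, le_antisymm ?_ ?_⟩
  · have := hconn.dist_triangle (u := m) (v := a) (w := z)
    rwa [G.dist_comm (u := m) (v := a), dist_eq_one_iff_adj.2 ham,
      dist_eq_one_iff_adj.2 haz] at this
  · exact hconn.one_lt_dist_of_ne_of_not_adj hzm.symm (hindep m z ⟨ham, hbm⟩ ⟨haz, hbz⟩)

theorem GenericType.exists_wedge (hgen : GenericType G) (hconn : G.Connected) {p q : V}
    {r : ℕ} (hr : 1 ≤ r) (hpq : r + 1 ≤ G.dist p q) :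
    ∃ m z v, G.dist p m = r ∧ G.dist p z = r ∧ G.dist m z = 2 ∧
      G.Adj m v ∧ G.Adj z v ∧ G.dist p v = r + 1 := by
  obtain ⟨s, rfl⟩ : ∃ s, r = s + 1 := ⟨r - 1, by omega⟩
  obtain ⟨w, hw⟩ := hconn.exists_walk_length_eq_dist p q
  have hd {a b : ℕ} (hab : a ≤ b) (hb : b ≤ s + 2) :
      G.dist (w.getVert a) (w.getVert b) = b - a :=
    w.dist_getVert_getVert_of_length_eq_dist hw hab (by omega)
  have hp {b : ℕ} (hb : b ≤ s + 2) : G.dist p (w.getVert b) = b := by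
    simpa using hd (Nat.zero_le b) hb
  have hadj {a : ℕ} (ha : a ≤ s + 1) : G.Adj (w.getVert a) (w.getVert (a + 1)) := by
    rw [← dist_eq_one_iff_adj, hd (by omega) (by omega)]
    omega
  have hav : G.dist (w.getVert s) (w.getVert (s + 2)) = 2 := by
    rw [hd (by omega) le_rfl]
    omega
  obtain ⟨z, haz, hvz, hmz⟩ := hgen.exists_common_neighbor_dist_eq_two hconn hav
    (hadj (by omega)) (hadj le_rfl).symm
  refine ⟨w.getVert (s + 1), z, w.getVert (s + 2), hp (by omega), ?_, hmz, hadj le_rfl,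
    hvz.symm, hp le_rfl⟩
  have h₁ := hconn.dist_triangle (u := p) (v := w.getVert s) (w := z)
  have h₂ := hconn.dist_triangle (u := p) (v := z) (w := w.getVert (s + 2))
  rw [hp (by omega), dist_eq_one_iff_adj.2 haz] at h₁
  rw [hp le_rfl, dist_eq_one_iff_adj.2 hvz.symm] at h₂
  omega

def WedgeExtends (G : SimpleGraph V) (r : ℕ) : Prop :=
  ∀ y A B : V, G.dist y A = r → G.dist y B = r → G.dist A B = 2 →
    ∃ u, G.Adj A u ∧ G.Adj B u ∧ G.dist y u = r + 1

theorem IsMetricallyHomogeneous.wedgeExtends (hG : IsMetricallyHomogeneous G)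
    (hgen : GenericType G) {p q : V} {r : ℕ} (hr : 1 ≤ r) (hpq : r + 1 ≤ G.dist p q) :
    WedgeExtends G r := by
  intro y A B hA hB hAB
  obtain ⟨m, z, v, hm, hz, hmz, hmv, hzv, hv⟩ := hgen.exists_wedge hG.1 hr hpq
  obtain ⟨φ, hφ, rfl, rfl, rfl⟩ := hG.exists_isometry_of_dist_eq_s19
    (hA.trans hm.symm) (hB.trans hz.symm) (hAB.trans hmz.symm)
  refine ⟨φ v, ?_, ?_, (hφ p v).trans hv⟩
  · rwa [← dist_eq_one_iff_adj, hφ, dist_eq_one_iff_adj]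
  · rwa [← dist_eq_one_iff_adj, hφ, dist_eq_one_iff_adj]

theorem WedgeExtends.exists_common_neighbor {r : ℕ} (hext : WedgeExtends G r)
    (hconn : G.Connected) {x y A B D : V} (hDA : G.Adj D A) (hDB : G.Adj D B)
    (hx : G.dist x A = G.dist x B + 2) (hyA : G.dist y A = r) (hyB : G.dist y B = r) :
    ∃ u, G.Adj A u ∧ G.Adj B u ∧ G.dist x u = G.dist x B + 1 ∧ G.dist y u = r + 1 := by
  have hAB : G.dist A B = 2 := by
    have h₁ := hconn.dist_triangle (u := A) (v := D) (w := B)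
    have h₂ := hconn.dist_triangle (u := x) (v := B) (w := A)
    rw [G.dist_comm (u := A) (v := D), dist_eq_one_iff_adj.2 hDA,
      dist_eq_one_iff_adj.2 hDB] at h₁
    rw [G.dist_comm (u := B)] at h₂
    omega
  obtain ⟨u, hAu, hBu, hyu⟩ := hext y A B hyA hyB hAB
  refine ⟨u, hAu, hBu, ?_, hyu⟩
  have h₁ := hconn.dist_triangle (u := x) (v := B) (w := u)
  have h₂ := hconn.dist_triangle (u := x) (v := u) (w := A)
  rw [dist_eq_one_iff_adj.2 hBu] at h₁
  rw [G.dist_comm (u := u), dist_eq_one_iff_adj.2 hAu] at h₂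
  omega

def IsSlantPath (G : SimpleGraph V) (x y : V) (a b n : ℕ) (f : ℕ → V) : Prop :=
  (∀ c ≤ n, G.dist x (f c) + c = a ∧ G.dist y (f c) = b + c) ∧
    ∀ c < n, G.Adj (f c) (f (c + 1))

theorem IsSlantPath.exists_succ {x y : V} {a b n : ℕ} {f : ℕ → V}
    (hf : IsSlantPath G x y a b n f) (hconn : G.Connected)
    (hext : ∀ m < n, WedgeExtends G (b + 1 + m)) {q : V} (hq : G.Adj (f 0) q)
    (hxq : G.dist x q = a + 1) (hyq : G.dist y q = b + 1) :
    ∃ f', f' 0 = q ∧ IsSlantPath G x y (a + 1) (b + 1) n f' := by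
  suffices ∀ m ≤ n, ∃ f', f' 0 = q ∧ IsSlantPath G x y (a + 1) (b + 1) m f' ∧
      G.Adj (f m) (f' m) from
    (this n le_rfl).imp fun _ h ↦ ⟨h.1, h.2.1⟩
  intro m
  induction m with
  | zero =>
    refine fun _ ↦ ⟨fun _ ↦ q, rfl, ⟨fun c hc ↦ ?_, by omega⟩, hq⟩
    obtain rfl : c = 0 := by omega
    exact ⟨hxq, hyq⟩
  | succ m ih =>
    intro hm
    obtain ⟨f', hf'0, ⟨hdist, hadj⟩, hlink⟩ := ih (by omega)
    obtain ⟨hxf, hyf⟩ := hf.1 (m + 1) hm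
    obtain ⟨hxf', hyf'⟩ := hdist m le_rfl
    obtain ⟨u, hf'u, hfu, hxu, hyu⟩ := (hext m hm).exists_common_neighbor (x := x) hconn
      hlink (hf.2 m hm) (by omega) hyf' (by omega)
    refine ⟨Function.update f' (m + 1) u, ?_, ⟨fun c hc ↦ ?_, fun c hc ↦ ?_⟩, ?_⟩
    · rwa [Function.update_of_ne (by omega)]
    · obtain hc | rfl := hc.lt_or_eq
      · rw [Function.update_of_ne (by omega)]
        exact hdist c (by omega)
      · rw [Function.update_self]
        omega
    · obtain hc | rfl := Nat.lt_succ_iff_lt_or_eq.1 hc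
      · rw [Function.update_of_ne (by omega), Function.update_of_ne (by omega)]
        exact hadj c hc
      · rwa [Function.update_self, Function.update_of_ne (by omega)]
    · rwa [Function.update_self]

theorem exists_isSlantPath_of_geodesic (hconn : G.Connected) {u v : V} {w : G.Walk u v}
    (hw : w.length = G.dist u v) {i k : ℕ} (hki : k ≤ i) (hik : i + k ≤ w.length)
    (hext : ∀ r, 1 ≤ r → r < 2 * k → WedgeExtends G r) :
    ∀ t ≤ k, ∃ f, f 0 = w.getVert (i + t) ∧
      IsSlantPath G u (w.getVert i) (i + t) t k f := by
  have hd {a b : ℕ} (hab : a ≤ b) (hb : b ≤ i + k) :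
      G.dist (w.getVert a) (w.getVert b) = b - a :=
    w.dist_getVert_getVert_of_length_eq_dist hw hab (by omega)
  have hu {b : ℕ} (hb : b ≤ i + k) : G.dist u (w.getVert b) = b := by
    simpa using hd (Nat.zero_le b) hb
  intro t
  induction t with
  | zero =>
    refine fun _ ↦ ⟨fun c ↦ w.getVert (i - c), rfl, fun c hc ↦ ⟨?_, ?_⟩, fun c hc ↦ ?_⟩
    · rw [hu (by omega)]
      omega
    · rw [G.dist_comm, hd (by omega) (by omega)]
      omega
    · have h := w.adj_getVert_succ (i := i - (c + 1)) (by omega)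
      rwa [show i - (c + 1) + 1 = i - c by omega, G.adj_comm] at h
  | succ t ih =>
    intro ht
    obtain ⟨f, hf0, hf⟩ := ih (by omega)
    exact hf.exists_succ hconn (fun m hm ↦ hext _ (by omega) (by omega))
      (hf0 ▸ w.adj_getVert_succ (by omega)) (hu (by omega))
      (by rw [hd (by omega) (by omega)]; omega)

end Wedges

/-- in a metrically homogeneous graph of generic type, if
`k ≤ i` and `i + k ≤ δ` then a triangle of type `(i,i,2k)` is realized. -/
theorem realize_i_i_two_k {V : Type*} (G : SimpleGraph V) (δ : ℕ)
    (hG : IsMetricallyHomogeneous G) (hgen : GenericType G)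
    (hdiam : HasDiameter G δ)
    (i k : ℕ) (hki : k ≤ i) (hik : i + k ≤ δ) :
    ∃ x y z : V, G.dist x y = i ∧ G.dist x z = i ∧ G.dist y z = 2 * k := by
  obtain ⟨p, q, hpq⟩ := hdiam.2
  obtain ⟨w, hw⟩ := hG.1.exists_walk_length_eq_dist p q
  have hext (r : ℕ) (hr : 1 ≤ r) (hrk : r < 2 * k) : WedgeExtends G r :=
    hG.wedgeExtends hgen hr (p := p) (q := q) (by omega)
  obtain ⟨f, -, hf⟩ :=
    exists_isSlantPath_of_geodesic hG.1 hw hki (by omega) hext k le_rfl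
  obtain ⟨hx, hy⟩ := hf.1 k le_rfl
  refine ⟨p, w.getVert i, f k, ?_, by omega, by omega⟩
  simpa using w.dist_getVert_getVert_of_length_eq_dist hw (Nat.zero_le i) (by omega)
end
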